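/- arXiv:1605.04029 — 3 statements merged into one kernel-verified Lean document; each statement's English description precedes it below -/
import Mathlib

section
/- Fix θ₀ > 0 and a, b > 0. For each integer m ≥ 1 let y₁, …, y_m be independent and identically distributed Poisson(θ₀) random variables and set S = ∑_{i=1}^m y_i and θ̂ = S/m. Then sup over all integers m ≥ 1 and K ≥ 1 of E[ ∫₀^∞ K m (θ − θ̂)² dGamma(K·S + a, K·m + b)(θ) ] is finite, where the outer expectation is over the Poisson data. -/
/-!
Write `α = K S + a`, `r = K m + b`. The inner integral is `K m` times the posterior mean squared
error about `θ̂ = S / m`, i.e. `K m (α / r² + (α / r - θ̂)²)`. Since `K m ≤ r`, the variance part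
is at most `α / r ≤ θ̂ + a / b`; since `α / r - θ̂ = (m a - b S) / (m r)`, the bias part is at most
`(m a - b S)² / m³ ≤ 2 a² + 2 b² S² / m³`. By Cauchy–Schwarz `S² ≤ m ∑ yᵢ²`, so the risk is at most
`a / b + 2 a²` plus the sample mean of `yᵢ + 2 b² yᵢ²`, whose expectation is a Poisson moment
independent of `m` and `K`.
-/

open MeasureTheory ProbabilityTheory Set Real
open scoped NNReal Nat

namespace ProbabilityTheory

variable {α r : ℝ}

lemma gammaPDFReal_eq_zero_of_neg {x : ℝ} (hx : x < 0) : gammaPDFReal α r x = 0 :=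
  if_neg hx.not_ge

lemma integral_gammaMeasure_eq (hα : 0 < α) (hr : 0 < r) (f : ℝ → ℝ) :
    ∫ x, f x ∂gammaMeasure α r = ∫ x in Ioi 0, gammaPDFReal α r x * f x := by
  unfold gammaMeasure gammaPDF
  rw [integral_withDensity_eq_integral_toReal_smul
    (measurable_gammaPDFReal α r).ennreal_ofReal (.of_forall fun _ => ENNReal.ofReal_lt_top),
    ← integral_Ici_eq_integral_Ioi, setIntegral_eq_integral_of_forall_compl_eq_zero]
  · simp only [ENNReal.toReal_ofReal (gammaPDFReal_nonneg hα hr _), smul_eq_mul]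
  · intro x hx
    simp [gammaPDFReal_eq_zero_of_neg (not_le.mp hx)]

lemma integrable_gammaMeasure_iff (hα : 0 < α) (hr : 0 < r) {f : ℝ → ℝ} :
    Integrable f (gammaMeasure α r) ↔
      IntegrableOn (fun x => gammaPDFReal α r x * f x) (Ioi 0) := by
  have hsupp : Function.support (fun x => gammaPDFReal α r x * f x) ⊆ Ici 0 := fun x hx => by
    by_contra h
    simp [gammaPDFReal_eq_zero_of_neg (not_le.mp h)] at hx
  unfold gammaMeasure gammaPDF
  rw [integrable_withDensity_iff_integrable_smul'
    (measurable_gammaPDFReal α r).ennreal_ofReal (.of_forall fun _ => ENNReal.ofReal_lt_top),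
    ← integrableOn_Ici_iff_integrableOn_Ioi, integrableOn_iff_integrable_of_support_subset hsupp]
  simp only [ENNReal.toReal_ofReal (gammaPDFReal_nonneg hα hr _), smul_eq_mul]

lemma gammaPDFReal_mul_pow {x : ℝ} (hx : 0 < x) (n : ℕ) :
    gammaPDFReal α r x * x ^ n = r ^ α / Gamma α * (x ^ (α + n - 1) * exp (-(r * x))) := by
  rw [gammaPDFReal, if_pos hx.le, add_sub_right_comm, rpow_add hx, rpow_natCast]
  ring

lemma integrable_pow_gammaMeasure (hα : 0 < α) (hr : 0 < r) (n : ℕ) :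
    Integrable (fun x => x ^ n) (gammaMeasure α r) := by
  rw [integrable_gammaMeasure_iff hα hr]
  refine IntegrableOn.congr_fun ?_ (fun x hx => (gammaPDFReal_mul_pow hx n).symm) measurableSet_Ioi
  have h := integrableOn_rpow_mul_exp_neg_mul_rpow (p := 1) (s := α + n - 1)
    (by linarith [n.cast_nonneg (α := ℝ)]) zero_lt_one hr
  simp only [rpow_one, neg_mul] at h
  exact h.const_mul _

lemma integral_pow_gammaMeasure (hα : 0 < α) (hr : 0 < r) (n : ℕ) :
    ∫ x, x ^ n ∂gammaMeasure α r = Gamma (α + n) / (Gamma α * r ^ n) := by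
  rw [integral_gammaMeasure_eq hα hr, setIntegral_congr_fun measurableSet_Ioi
    (fun x hx => gammaPDFReal_mul_pow hx n), integral_const_mul,
    integral_rpow_mul_exp_neg_mul_Ioi (by positivity) hr, one_div, inv_rpow hr.le,
    rpow_add hr, rpow_natCast]
  have := (Gamma_pos_of_pos hα).ne'
  field_simp

lemma integral_id_gammaMeasure (hα : 0 < α) (hr : 0 < r) :
    ∫ x, x ∂gammaMeasure α r = α / r := by
  have h := integral_pow_gammaMeasure hα hr 1
  simp only [pow_one, Nat.cast_one] at h
  rw [h, Gamma_add_one hα.ne']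
  have := (Gamma_pos_of_pos hα).ne'
  field_simp

lemma integral_sq_gammaMeasure (hα : 0 < α) (hr : 0 < r) :
    ∫ x, x ^ 2 ∂gammaMeasure α r = α * (α + 1) / r ^ 2 := by
  rw [integral_pow_gammaMeasure hα hr 2, Nat.cast_two, ← one_add_one_eq_two, ← add_assoc,
    Gamma_add_one (by positivity), Gamma_add_one hα.ne']
  have := (Gamma_pos_of_pos hα).ne'
  field_simp

lemma integral_sub_sq_gammaMeasure (hα : 0 < α) (hr : 0 < r) (c : ℝ) :
    ∫ x, (x - c) ^ 2 ∂gammaMeasure α r = α / r ^ 2 + (α / r - c) ^ 2 := by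
  have := isProbabilityMeasure_gammaMeasure hα hr
  have h1 := integrable_pow_gammaMeasure hα hr 1
  have h2 := integrable_pow_gammaMeasure hα hr 2
  simp only [pow_one] at h1
  have h3 : Integrable (fun x => x ^ 2 - 2 * c * x) (gammaMeasure α r) := h2.sub (h1.const_mul _)
  simp_rw [show ∀ x, (x - c) ^ 2 = (x ^ 2 - 2 * c * x) + c ^ 2 by intro; ring]
  rw [integral_add h3 (integrable_const _), integral_sub h2 (h1.const_mul _), integral_const_mul,
    integral_sq_gammaMeasure hα hr, integral_id_gammaMeasure hα hr, integral_const, probReal_univ,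
    one_smul]
  field_simp
  ring

lemma integrable_pow_poissonMeasure (r : ℝ≥0) (k : ℕ) :
    Integrable (fun n : ℕ => (n : ℝ) ^ k) (poissonMeasure r) := by
  rw [integrable_poissonMeasure_iff]
  refine ((summable_pow_div_factorial (r * exp 1)).mul_left (exp (-r) * k !)).of_nonneg_of_le
    (fun n => by positivity) (fun n => ?_)
  -- `n ^ k ≤ k! * e ^ n` is one term of the exponential series of `n`.
  have hpow : (n : ℝ) ^ k ≤ k ! * exp 1 ^ n := by
    rw [← exp_nat_mul, mul_one, ← div_le_iff₀' (by positivity)]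
    exact pow_div_factorial_le_exp _ n.cast_nonneg k
  rw [Real.norm_of_nonneg (by positivity), mul_pow]
  calc exp (-r) * r ^ n / n ! * (n : ℝ) ^ k ≤ exp (-r) * r ^ n / n ! * (k ! * exp 1 ^ n) := by
        gcongr
    _ = exp (-r) * k ! * (r ^ n * exp 1 ^ n / n !) := by ring

end ProbabilityTheory

namespace MeasureTheory

lemma integral_sum_comp_eval_pi {ι X : Type*} [Fintype ι] [MeasurableSpace X] {μ : Measure X}
    [IsProbabilityMeasure μ] {g : X → ℝ} (hg : Integrable g μ) :
    ∫ y, ∑ i, g (y i) ∂Measure.pi (fun _ : ι => μ) = Fintype.card ι * ∫ x, g x ∂μ := by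
  rw [integral_finsetSum _ (fun i _ => integrable_comp_eval hg)]
  simp [integral_comp_eval (μ := fun _ : ι => μ) hg.aestronglyMeasurable]

end MeasureTheory

lemma mul_gamma_posterior_variance_le {K m s a b : ℝ} (hK : 0 ≤ K) (hm : 0 < m) (hs : 0 ≤ s)
    (ha : 0 ≤ a) (hb : 0 < b) :
    K * m * ((K * s + a) / (K * m + b) ^ 2) ≤ s / m + a / b := by
  have hr : 0 < K * m + b := by positivity
  calc K * m * ((K * s + a) / (K * m + b) ^ 2)
      = K * m / (K * m + b) * ((K * s + a) / (K * m + b)) := by field_simp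
    _ ≤ 1 * ((K * s + a) / (K * m + b)) := by
        gcongr
        exact (div_le_one hr).mpr (by linarith)
    _ = K * s / (K * m + b) + a / (K * m + b) := by ring
    _ ≤ s / m + a / b := by
        refine add_le_add ?_ (div_le_div_of_nonneg_left ha hb (by nlinarith))
        rw [div_le_div_iff₀ hr hm]
        nlinarith [mul_nonneg hs hb.le]

lemma mul_gamma_posterior_bias_sq_le {K m s q a b : ℝ} (hK : 1 ≤ K) (hm : 1 ≤ m) (hb : 0 < b)
    (hsq : s ^ 2 ≤ m * q) :
    K * m * ((K * s + a) / (K * m + b) - s / m) ^ 2 ≤ 2 * a ^ 2 + 2 * b ^ 2 * q / m := by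
  have hm0 : 0 < m := by linarith
  have hq : 0 ≤ q := nonneg_of_mul_nonneg_right (by nlinarith) hm0
  have hbias : (K * s + a) / (K * m + b) - s / m = (m * a - b * s) / (m * (K * m + b)) := by
    field_simp
    ring
  have hnum : (m * a - b * s) ^ 2 ≤ 2 * m ^ 2 * a ^ 2 + 2 * b ^ 2 * (m * q) := by
    nlinarith [sq_nonneg (m * a + b * s)]
  calc K * m * ((K * s + a) / (K * m + b) - s / m) ^ 2
      = K * m * (m * a - b * s) ^ 2 / (m * (K * m + b)) ^ 2 := by rw [hbias, div_pow]; ring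
    _ ≤ K * m * (m * a - b * s) ^ 2 / (m * (K * m)) ^ 2 := by gcongr; linarith
    _ = (m * a - b * s) ^ 2 / m ^ 3 / K := by field_simp
    _ ≤ (m * a - b * s) ^ 2 / m ^ 3 := div_le_self (by positivity) hK
    _ ≤ (2 * m ^ 2 * a ^ 2 + 2 * b ^ 2 * (m * q)) / m ^ 3 := by gcongr
    _ = 2 * a ^ 2 / m + 2 * b ^ 2 * q / m / m := by field_simp
    _ ≤ 2 * a ^ 2 + 2 * b ^ 2 * q / m := by
        gcongr
        · exact div_le_self (by positivity) hm
        · exact div_le_self (by positivity) hm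

lemma integral_mul_sub_sq_gammaMeasure_le {K m s q a b : ℝ} (hK : 1 ≤ K) (hm : 1 ≤ m)
    (hs : 0 ≤ s) (ha : 0 < a) (hb : 0 < b) (hsq : s ^ 2 ≤ m * q) :
    ∫ θ, K * m * (θ - s / m) ^ 2 ∂gammaMeasure (K * s + a) (K * m + b)
      ≤ a / b + 2 * a ^ 2 + (s + 2 * b ^ 2 * q) / m := by
  have hm0 : 0 < m := by linarith
  rw [integral_const_mul, integral_sub_sq_gammaMeasure (by positivity) (by positivity), mul_add]
  have hvar := mul_gamma_posterior_variance_le (by linarith) hm0 hs ha.le hb (K := K) (a := a)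
  have hbias := mul_gamma_posterior_bias_sq_le hK hm hb hsq (a := a)
  rw [add_div s]
  linarith

theorem poisson_subset_posterior_uniform_second_moment_general
    (θ₀ : ℝ≥0) (a b : ℝ) (ha : 0 < a) (hb : 0 < b) :
    ∃ C : ℝ, ∀ (m K : ℕ), 1 ≤ m → 1 ≤ K →
      (∫ y : Fin m → ℕ,
          (∫ θ : ℝ, (K : ℝ) * m * (θ - (∑ i, (y i : ℝ)) / m) ^ 2
            ∂(gammaMeasure ((K : ℝ) * ∑ i, (y i : ℝ) + a) ((K : ℝ) * m + b)))
        ∂(Measure.pi fun _ : Fin m => poissonMeasure θ₀)) ≤ C := by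
  set g : ℕ → ℝ := fun n => n + 2 * b ^ 2 * (n : ℝ) ^ 2 with hg_def
  have hg : Integrable g (poissonMeasure θ₀) := by
    have hid := integrable_pow_poissonMeasure θ₀ 1
    simp only [pow_one] at hid
    exact hid.add ((integrable_pow_poissonMeasure θ₀ 2).const_mul (2 * b ^ 2))
  refine ⟨a / b + 2 * a ^ 2 + ∫ n, g n ∂poissonMeasure θ₀, fun m K hm hK => ?_⟩
  have hm' : (1 : ℝ) ≤ m := by exact_mod_cast hm
  have hK' : (1 : ℝ) ≤ K := by exact_mod_cast hK
  have hrisk (y : Fin m → ℕ) :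
      ∫ θ, (K : ℝ) * m * (θ - (∑ i, (y i : ℝ)) / m) ^ 2
          ∂gammaMeasure ((K : ℝ) * ∑ i, (y i : ℝ) + a) ((K : ℝ) * m + b)
        ≤ a / b + 2 * a ^ 2 + (∑ i, g (y i)) / m := by
    have hsq : (∑ i, (y i : ℝ)) ^ 2 ≤ m * ∑ i, (y i : ℝ) ^ 2 := by
      simpa using sq_sum_le_card_mul_sum_sq (s := Finset.univ) (f := fun i => (y i : ℝ))
    simpa [hg_def, Finset.sum_add_distrib, Finset.mul_sum] using
      integral_mul_sub_sq_gammaMeasure_le hK' hm' (by positivity) ha hb hsq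
  have hsum : Integrable (fun y : Fin m → ℕ => ∑ i, g (y i))
      (Measure.pi fun _ => poissonMeasure θ₀) :=
    integrable_finsetSum _ fun i _ => integrable_comp_eval hg
  calc _ ≤ ∫ y, a / b + 2 * a ^ 2 + (∑ i, g (y i)) / m ∂Measure.pi fun _ => poissonMeasure θ₀ :=
        integral_mono_of_nonneg (.of_forall fun y => integral_nonneg fun θ => by positivity)
          ((integrable_const _).add (hsum.div_const _)) (.of_forall hrisk)
    _ = a / b + 2 * a ^ 2 + ∫ n, g n ∂poissonMeasure θ₀ := by
        rw [integral_add (integrable_const _) (hsum.div_const _), integral_const, probReal_univ,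
          one_smul, integral_div, integral_sum_comp_eval_pi hg, Fintype.card_fin,
          mul_div_cancel_left₀ _ (by positivity)]

/-- Proposition 2(i). For i.i.d. Poisson(θ₀) data, the expectations
`E ∫ K m (θ − θ̂)² dGamma(K·S + a, K·m + b)(θ)` are bounded uniformly over all subset
sizes `m ≥ 1` and numbers of subsets `K ≥ 1`, where `S = ∑ yᵢ` and `θ̂ = S/m`. -/
theorem poisson_subset_posterior_uniform_second_moment
    (θ₀ : ℝ≥0) (hθ₀ : 0 < θ₀) (a b : ℝ) (ha : 0 < a) (hb : 0 < b) :
    ∃ C : ℝ, ∀ (m K : ℕ), 1 ≤ m → 1 ≤ K →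
      (∫ y : Fin m → ℕ,
          (∫ θ : ℝ, (K : ℝ) * m * (θ - (∑ i, (y i : ℝ)) / m) ^ 2
            ∂(gammaMeasure ((K : ℝ) * ∑ i, (y i : ℝ) + a) ((K : ℝ) * m + b)))
        ∂(Measure.pi fun _ : Fin m => poissonMeasure θ₀)) ≤ C :=
  poisson_subset_posterior_uniform_second_moment_general θ₀ a b ha hb
end

section
/- Fix θ₀ ∈ (0,1) and a, b > 0. For each integer m ≥ 1 let y₁, …, y_m be independent and identically distributed Bernoulli(θ₀) random variables taking values in {0,1}, and set S = ∑_{i=1}^m y_i and θ̂ = S/m. Then sup over all integers m ≥ 1 and K ≥ 1 of E[ ∫₀¹ K m (θ − θ̂)² dBeta(K·S + a, K·(m − S) + b)(θ) ] is finite, where the outer expectation is over the Bernoulli data. -/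
/-!
Under Beta(α, β) one has `x · Beta(α, β)(dx) = α/(α+β) · Beta(α+1, β)(dx)`, which gives the mean
`α/(α+β)` and variance `αβ/((α+β)²(α+β+1))`. For the subset posterior `α + β = Km + a + b`, so
`Km` times the variance is at most `1/4`, and `Km` times the squared bias
`((ma − S(a+b)) / (m(Km+a+b)))²` is at most `(a+b)²` since `0 ≤ S ≤ m`. The bound
`1/4 + (a+b)²` thus holds for every data set, hence also in expectation.
-/

open MeasureTheory ProbabilityTheory Set
open scoped ENNReal

/-- The Beta(α, β) distribution on `ℝ`, supported on `(0,1)`, with density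
`x^(α−1) (1−x)^(β−1) / B(α, β)` where `B(α, β) = Γ(α)Γ(β)/Γ(α+β)`. -/
noncomputable def betaMeasure (α β : ℝ) : Measure ℝ :=
  volume.withDensity fun x => ENNReal.ofReal
    (if x ∈ Ioo (0:ℝ) 1 then
      x ^ (α - 1) * (1 - x) ^ (β - 1) * Real.Gamma (α + β) / (Real.Gamma α * Real.Gamma β)
    else 0)

theorem betaMeasure_eq_probabilityTheory_betaMeasure (α β : ℝ) :
    _root_.betaMeasure α β = ProbabilityTheory.betaMeasure α β := by
  refine congrArg volume.withDensity (funext fun x => ?_)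
  rw [betaPDF_eq, beta, one_div_div]
  simp only [mem_Ioo]
  split_ifs <;> ring_nf

namespace ProbabilityTheory

variable {α β : ℝ}

lemma beta_add_one_left (hα : 0 < α) (hβ : 0 < β) :
    beta (α + 1) β = α / (α + β) * beta α β := by
  have hαβ : 0 < α + β := by linarith
  rw [beta, beta, Real.Gamma_add_one hα.ne', add_right_comm, Real.Gamma_add_one hαβ.ne']
  have := Real.Gamma_pos_of_pos hαβ
  field_simp

lemma mul_betaPDFReal (hα : 0 < α) (hβ : 0 < β) (x : ℝ) :
    x * betaPDFReal α β x = α / (α + β) * betaPDFReal (α + 1) β x := by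
  unfold betaPDFReal
  split_ifs with hx
  · rw [beta_add_one_left hα hβ, add_sub_cancel_right, Real.rpow_sub_one hx.1.ne']
    have := beta_pos hα hβ
    have := hx.1.ne'
    field_simp
  · simp

lemma betaPDFReal_nonneg (hα : 0 < α) (hβ : 0 < β) (x : ℝ) : 0 ≤ betaPDFReal α β x := by
  by_cases hx : 0 < x ∧ x < 1
  · exact (betaPDFReal_pos hx.1 hx.2 hα hβ).le
  · simp [betaPDFReal, hx]

lemma integral_betaMeasure_eq_integral_betaPDFReal_mul (hα : 0 < α) (hβ : 0 < β) (g : ℝ → ℝ) :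
    ∫ x, g x ∂betaMeasure α β = ∫ x, betaPDFReal α β x * g x := by
  rw [betaMeasure, integral_withDensity_eq_integral_toReal_smul (f := betaPDF α β)
    (measurable_betaPDFReal α β).ennreal_ofReal
    (Filter.Eventually.of_forall fun _ => ENNReal.ofReal_lt_top)]
  simp only [betaPDF, ENNReal.toReal_ofReal (betaPDFReal_nonneg hα hβ _), smul_eq_mul]

lemma integral_mul_betaMeasure (hα : 0 < α) (hβ : 0 < β) (g : ℝ → ℝ) :
    ∫ x, x * g x ∂betaMeasure α β = α / (α + β) * ∫ x, g x ∂betaMeasure (α + 1) β := by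
  rw [integral_betaMeasure_eq_integral_betaPDFReal_mul hα hβ,
    integral_betaMeasure_eq_integral_betaPDFReal_mul (by linarith) hβ, ← integral_const_mul]
  congr 1 with x
  rw [← mul_assoc, mul_comm (betaPDFReal α β x) x, mul_betaPDFReal hα hβ, mul_assoc]

lemma ae_mem_Ioo_betaMeasure (α β : ℝ) : ∀ᵐ x ∂betaMeasure α β, x ∈ Ioo 0 1 := by
  rw [betaMeasure,
    ae_withDensity_iff (f := betaPDF α β) (measurable_betaPDFReal α β).ennreal_ofReal]
  refine Filter.Eventually.of_forall fun x hx => ?_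
  by_contra h
  exact hx (by simp [betaPDF_eq, show ¬(0 < x ∧ x < 1) from h])

lemma _root_.Continuous.integrable_betaMeasure (hα : 0 < α) (hβ : 0 < β) {f : ℝ → ℝ}
    (hf : Continuous f) : Integrable f (betaMeasure α β) := by
  have := isProbabilityMeasureBeta hα hβ
  obtain ⟨C, hC⟩ :=
    isCompact_Icc.exists_bound_of_continuousOn (hf.continuousOn (s := Icc (0 : ℝ) 1))
  exact .of_bound hf.aestronglyMeasurable C
    ((ae_mem_Ioo_betaMeasure α β).mono fun x hx => hC x (Ioo_subset_Icc_self hx))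

lemma integral_id_betaMeasure (hα : 0 < α) (hβ : 0 < β) :
    ∫ x, x ∂betaMeasure α β = α / (α + β) := by
  have := isProbabilityMeasureBeta (α := α + 1) (by linarith) hβ
  simpa using integral_mul_betaMeasure hα hβ fun _ => 1

lemma integral_sq_betaMeasure (hα : 0 < α) (hβ : 0 < β) :
    ∫ x, x ^ 2 ∂betaMeasure α β = α / (α + β) * ((α + 1) / (α + β + 1)) := by
  simp only [sq, integral_mul_betaMeasure hα hβ,
    integral_id_betaMeasure (α := α + 1) (by linarith) hβ, add_right_comm]

lemma integral_sub_sq_betaMeasure (hα : 0 < α) (hβ : 0 < β) (c : ℝ) :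
    ∫ x, (x - c) ^ 2 ∂betaMeasure α β
      = α * β / ((α + β) ^ 2 * (α + β + 1)) + (α / (α + β) - c) ^ 2 := by
  have := isProbabilityMeasureBeta hα hβ
  have hint : ∀ {f : ℝ → ℝ}, Continuous f → Integrable f (betaMeasure α β) :=
    fun hf => hf.integrable_betaMeasure hα hβ
  have : 0 < α + β := by linarith
  simp only [sub_sq]
  rw [integral_add (hint (by fun_prop)) (hint (by fun_prop)), integral_sub (hint (by fun_prop))
    (hint (by fun_prop)), integral_mul_const, integral_const_mul, integral_sq_betaMeasure hα hβ,
    integral_id_betaMeasure hα hβ, integral_const, probReal_univ]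
  field_simp
  ring

end ProbabilityTheory

lemma mul_beta_variance_le_quarter {α β N : ℝ} (hα : 0 < α) (hβ : 0 < β) (hN : N ≤ α + β + 1) :
    N * (α * β / ((α + β) ^ 2 * (α + β + 1))) ≤ 1 / 4 := by
  have hαβ : 0 < α + β := by linarith
  calc N * (α * β / ((α + β) ^ 2 * (α + β + 1)))
      ≤ (α + β + 1) * (α * β / ((α + β) ^ 2 * (α + β + 1))) :=
        mul_le_mul_of_nonneg_right hN (by positivity)
    _ = α * β / (α + β) ^ 2 := by field_simp
    _ ≤ 1 / 4 := by
        rw [div_le_iff₀ (by positivity)]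
        nlinarith [sq_nonneg (α - β)]

lemma mul_sq_posterior_mean_sub_le {a b K m s : ℝ} (ha : 0 ≤ a) (hb : 0 ≤ b) (hm : 0 < m)
    (hKm : 1 ≤ K * m) (hs0 : 0 ≤ s) (hsm : s ≤ m) :
    K * m * ((K * s + a) / (K * m + a + b) - s / m) ^ 2 ≤ (a + b) ^ 2 := by
  have hn : K * m ≤ K * m + a + b := by linarith
  have hdiff : (K * s + a) / (K * m + a + b) - s / m
      = (m * a - s * (a + b)) / (m * (K * m + a + b)) := by
    field_simp
    ring
  have hnum : (m * a - s * (a + b)) ^ 2 ≤ (m * (a + b)) ^ 2 :=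
    sq_le_sq' (by nlinarith) (by nlinarith)
  rw [hdiff, div_pow, mul_div_assoc', div_le_iff₀ (by positivity)]
  calc K * m * (m * a - s * (a + b)) ^ 2
      ≤ (K * m + a + b) ^ 2 * (m * (a + b)) ^ 2 := by
        gcongr
        nlinarith
    _ = (a + b) ^ 2 * (m * (K * m + a + b)) ^ 2 := by ring

lemma integral_mul_sub_sq_betaMeasure_le {a b K m s : ℝ} (ha : 0 < a) (hb : 0 < b)
    (hK : 1 ≤ K) (hm : 1 ≤ m) (hs0 : 0 ≤ s) (hsm : s ≤ m) :
    ∫ θ, K * m * (θ - s / m) ^ 2 ∂_root_.betaMeasure (K * s + a) (K * (m - s) + b)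
      ≤ 1 / 4 + (a + b) ^ 2 := by
  have hα : 0 < K * s + a := by nlinarith
  have hβ : 0 < K * (m - s) + b := by nlinarith
  have hsum : K * s + a + (K * (m - s) + b) = K * m + a + b := by ring
  rw [betaMeasure_eq_probabilityTheory_betaMeasure, integral_const_mul,
    integral_sub_sq_betaMeasure hα hβ, mul_add]
  refine add_le_add (mul_beta_variance_le_quarter hα hβ (by linarith)) ?_
  rw [hsum]
  exact mul_sq_posterior_mean_sub_le ha.le hb.le (by linarith) (by nlinarith) hs0 hsm

/-- Proposition 2(iii). For i.i.d. Bernoulli(θ₀) data, the expectations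
`E ∫ K m (θ − θ̂)² dBeta(K·S + a, K·(m−S) + b)(θ)` are bounded uniformly over all subset
sizes `m ≥ 1` and numbers of subsets `K ≥ 1`, where `S = ∑ yᵢ` and `θ̂ = S/m`. -/
theorem bernoulli_subset_posterior_uniform_second_moment
    (θ₀ : ℝ≥0∞) (hθ₀1 : θ₀ < 1) (a b : ℝ) (ha : 0 < a) (hb : 0 < b) :
    ∃ C : ℝ, ∀ (m K : ℕ), 1 ≤ m → 1 ≤ K →
      (∫ y : Fin m → Bool,
          (∫ θ : ℝ, (K : ℝ) * m *
              (θ - (∑ i, if y i then (1:ℝ) else 0) / m) ^ 2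
            ∂(_root_.betaMeasure ((K : ℝ) * (∑ i, if y i then (1:ℝ) else 0) + a)
                ((K : ℝ) * ((m : ℝ) - ∑ i, if y i then (1:ℝ) else 0) + b)))
        ∂(Measure.pi fun _ : Fin m => (PMF.bernoulli θ₀.toNNReal
          (by simpa using ENNReal.toNNReal_mono ENNReal.one_ne_top hθ₀1.le)).toMeasure)) ≤ C := by
  refine ⟨1 / 4 + (a + b) ^ 2, fun m K hm hK => ?_⟩
  calc _ ≤ ∫ _ : Fin m → Bool, 1 / 4 + (a + b) ^ 2 ∂_ :=
        integral_mono .of_finite (integrable_const _) fun y => by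
          rw [Finset.sum_boole]
          exact integral_mul_sub_sq_betaMeasure_le ha hb (by exact_mod_cast hK)
            (by exact_mod_cast hm) (Nat.cast_nonneg _)
            (by exact_mod_cast (Finset.card_filter_le _ _).trans (Finset.card_fin m).le)
    _ = 1 / 4 + (a + b) ^ 2 := by simp
end

section
/- For every real s ≥ 1, the upper incomplete gamma function satisfies ∫₁^∞ u^{s−1} e^{−u} du ≥ e^{−1} Γ(s) (1 + 1/s)^{s−1}. -/
/-!
Substituting `u = t + 1`, the claim is `∫₀^∞ (1 + 1/t)^{s-1} dμ(t) ≥ (1 + 1/s)^{s-1}` for the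
measure `dμ = t^{s-1} e^{-t} dt` of mass `Γ(s)` and mean `s`, i.e. Jensen's inequality for the
convex function `t ↦ (1 + 1/t)^{s-1}`. Concretely, it lies above its tangent line at `t = s`
(from `eˣ ≥ 1 + x` and `log x ≥ 1 - 1/x`), and that line integrates to `(1 + 1/s)^{s-1} Γ(s)`
because `∫₀^∞ t · t^{s-1} e^{-t} dt = s Γ(s)`.
-/

open MeasureTheory Set

theorem integrableOn_Ioi_comp_add_right {E : Type*} [NormedAddCommGroup E] (f : ℝ → E) (a d : ℝ) :
    IntegrableOn (fun t => f (t + d)) (Ioi a) ↔ IntegrableOn f (Ioi (a + d)) := by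
  simpa [preimage_add_const_Ioi, Function.comp_def] using
    (measurePreserving_add_right volume d).integrableOn_comp_preimage
      (measurableEmbedding_addRight d) (f := f) (s := Ioi (a + d))

theorem setIntegral_Ioi_comp_add_right {E : Type*} [NormedAddCommGroup E] [NormedSpace ℝ E]
    (f : ℝ → E) (a d : ℝ) :
    ∫ t in Ioi a, f (t + d) = ∫ u in Ioi (a + d), f u := by
  simpa [preimage_add_const_Ioi] using
    (measurePreserving_add_right volume d).setIntegral_preimage_emb
      (measurableEmbedding_addRight d) f (Ioi (a + d))

namespace Real

theorem rpow_mul_one_add_mul_one_sub_div_le_rpow {x y a : ℝ} (hx : 0 < x) (hy : 0 < y)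
    (ha : 0 ≤ a) : y ^ a * (1 + a * (1 - y / x)) ≤ x ^ a := by
  have hlog : 1 - y / x ≤ log (x / y) := by
    simpa using one_sub_inv_le_log_of_pos (div_pos hx hy)
  calc y ^ a * (1 + a * (1 - y / x)) ≤ y ^ a * (1 + a * log (x / y)) := by gcongr
    _ ≤ y ^ a * exp (log (x / y) * a) := by
        gcongr
        linarith [add_one_le_exp (log (x / y) * a)]
    _ = x ^ a := by
        rw [← rpow_def_of_pos (div_pos hx hy), ← mul_rpow hy.le (div_pos hx hy).le,
          mul_div_cancel₀ x hy.ne']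

end Real

theorem tangent_mul_rpow_le_add_one_rpow {s t a : ℝ} (hs : 0 < s) (ht : 0 < t) (ha : 0 ≤ a) :
    (1 + 1 / s) ^ a * (1 + a * ((s - t) / (s * (s + 1)))) * t ^ a ≤ (t + 1) ^ a := by
  have hslope : (s - t) / (s * (s + 1)) ≤ 1 - (1 + 1 / s) * t / (t + 1) := by
    have : 1 - (1 + 1 / s) * t / (t + 1)
        = (s - t) / (s * (s + 1)) + (s - t) ^ 2 / (s * (s + 1) * (t + 1)) := by
      field_simp; ring
    rw [this]
    linarith [show 0 ≤ (s - t) ^ 2 / (s * (s + 1) * (t + 1)) by positivity]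
  calc (1 + 1 / s) ^ a * (1 + a * ((s - t) / (s * (s + 1)))) * t ^ a
      = ((1 + 1 / s) * t) ^ a * (1 + a * ((s - t) / (s * (s + 1)))) := by
        rw [Real.mul_rpow (by positivity) ht.le]; ring
    _ ≤ ((1 + 1 / s) * t) ^ a * (1 + a * (1 - (1 + 1 / s) * t / (t + 1))) := by gcongr
    _ ≤ (t + 1) ^ a :=
        Real.rpow_mul_one_add_mul_one_sub_div_le_rpow (by positivity) (by positivity) ha

open Real in
theorem exp_neg_one_mul_Gamma_mul_le_integral_Ioi_add_one {s : ℝ} (hs : 1 ≤ s) :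
    exp (-1) * Gamma s * (1 + 1 / s) ^ (s - 1) ≤
      ∫ t in Ioi (0 : ℝ), (t + 1) ^ (s - 1) * exp (-(t + 1)) := by
  have hs0 : 0 < s := by linarith
  set c := 1 + 1 / s
  set k := (s - 1) / (s * (s + 1))
  have hΓ₀ : IntegrableOn (fun t => exp (-t) * t ^ (s - 1)) (Ioi 0) := GammaIntegral_convergent hs0
  have hΓ₁ : IntegrableOn (fun t => exp (-t) * t ^ s) (Ioi 0) := by
    simpa using GammaIntegral_convergent (s := s + 1) (by linarith)
  have hΓ₁_eq : ∫ t in Ioi (0 : ℝ), exp (-t) * t ^ s = s * Gamma s := by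
    simpa [Gamma_add_one hs0.ne'] using (Gamma_eq_integral (s := s + 1) (by linarith)).symm
  have hmoment : IntegrableOn (fun t => s * (exp (-t) * t ^ (s - 1)) - exp (-t) * t ^ s) (Ioi 0) :=
    (hΓ₀.const_mul s).sub hΓ₁
  have hmoment_eq : ∫ t in Ioi (0 : ℝ), (s * (exp (-t) * t ^ (s - 1)) - exp (-t) * t ^ s) = 0 := by
    rw [integral_sub (hΓ₀.const_mul s) hΓ₁, integral_const_mul, hΓ₁_eq, ← Gamma_eq_integral hs0]
    ring
  have hF : IntegrableOn (fun t => (t + 1) ^ (s - 1) * exp (-(t + 1))) (Ioi 0) := by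
    refine (integrableOn_Ioi_comp_add_right (fun u => u ^ (s - 1) * exp (-u)) 0 1).2 ?_
    rw [zero_add]
    exact (hΓ₀.mono_set (Ioi_subset_Ioi zero_le_one)).congr_fun
      (fun u _ => mul_comm _ _) measurableSet_Ioi
  calc exp (-1) * Gamma s * c ^ (s - 1)
      = ∫ t in Ioi (0 : ℝ), exp (-1) * c ^ (s - 1) *
          (exp (-t) * t ^ (s - 1) + k * (s * (exp (-t) * t ^ (s - 1)) - exp (-t) * t ^ s)) := by
        rw [integral_const_mul, integral_add hΓ₀ (hmoment.const_mul k), integral_const_mul,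
          hmoment_eq, ← Gamma_eq_integral hs0]
        ring
    _ ≤ ∫ t in Ioi (0 : ℝ), (t + 1) ^ (s - 1) * exp (-(t + 1)) := by
        refine setIntegral_mono_on ((hΓ₀.add (hmoment.const_mul k)).const_mul _)
          hF measurableSet_Ioi fun t (ht : 0 < t) => ?_
        have hts : t ^ s = t ^ (s - 1) * t := by rw [← rpow_add_one ht.ne']; ring_nf
        have hexp : exp (-(t + 1)) = exp (-1) * exp (-t) := by rw [← exp_add]; ring_nf
        calc exp (-1) * c ^ (s - 1) *
              (exp (-t) * t ^ (s - 1) + k * (s * (exp (-t) * t ^ (s - 1)) - exp (-t) * t ^ s))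
            = exp (-1) * exp (-t) *
                (c ^ (s - 1) * (1 + (s - 1) * ((s - t) / (s * (s + 1)))) * t ^ (s - 1)) := by
              rw [hts]; ring
          _ ≤ exp (-1) * exp (-t) * (t + 1) ^ (s - 1) := by
              gcongr; exact tangent_mul_rpow_le_add_one_rpow hs0 ht (by linarith)
          _ = (t + 1) ^ (s - 1) * exp (-(t + 1)) := by rw [hexp]; ring

/-- Lower bound on the upper incomplete gamma function: for `s ≥ 1`,
`∫₁^∞ u^{s−1} e^{−u} du ≥ e^{−1} Γ(s) (1 + 1/s)^{s−1}`. -/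
theorem upper_incomplete_gamma_lower_bound (s : ℝ) (hs : 1 ≤ s) :
    Real.exp (-1) * Real.Gamma s * (1 + 1 / s) ^ (s - 1) ≤
      ∫ u in Ioi (1:ℝ), u ^ (s - 1) * Real.exp (-u) := by
  have hshift := setIntegral_Ioi_comp_add_right (fun u => u ^ (s - 1) * Real.exp (-u)) 0 1
  rw [zero_add] at hshift
  exact hshift ▸ exp_neg_one_mul_Gamma_mul_le_integral_Ioi_add_one hs
end
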